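/- arXiv:2305.17583 — 2 statements merged into one kernel-verified Lean document; each statement's English description precedes it below -/
import Mathlib

section
/- In the setting of the previous construction but with L copies of each parent and scaled weights θ_i/L: summing out all N·L binary parents yields unnormalized potential ∏_{i=1}^N (e^{p_i} e^{θ_i/L} + 1)^L on H=1 and ∏_{i=1}^N (e^{p_i}+1)^L on H=0; hence P(H=1) = [∏_i (e^{p_i}e^{θ_i/L}+1)^L] / [∏_i (e^{p_i}e^{θ_i/L}+1)^L + ∏_i (e^{p_i}+1)^L], and as L → ∞ this converges to σ(∑_{i=1}^N σ(p_i) θ_i). -/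
open Real Finset Filter

noncomputable def sigmoid (x : ℝ) : ℝ := Real.exp x / (Real.exp x + 1)

/-- Unnormalized joint potential of the star-shaped Markov network with `L`
copies of each of the `N` parents: copy `h i k` has unary potential
`e^{p i}` when true, and pairwise potential `e^{θ i / L}` with `H` when
both are true. -/
noncomputable def starPotentialL {N L : ℕ} (p θ : Fin N → ℝ)
    (h : Fin N → Fin L → Bool) (H : Bool) : ℝ :=
  ∏ i : Fin N, ∏ k : Fin L,
    (if h i k then Real.exp (p i) else 1) *
      (if h i k ∧ H then Real.exp (θ i / L) else 1)

/-! Summing out the parents factorises over the `N·L` copies, each copy of parent `i`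
contributing `e^{p_i} e^{θ_i/L} + 1` (if `H = 1`) or `e^{p_i} + 1` (if `H = 0`).
`P(H = 1)` is `σ` of the log-ratio of the two partition functions, which equals
`∑ᵢ L (s(p_i + θ_i/L) - s(p_i))` for the softplus `s x = log (e^x + 1)`; since `s' = σ`,
each term tends to `σ(p_i) θ_i`. -/

open Topology

lemma Fintype.sum_pi_prod_prod {ι β R : Type*} [Fintype ι] [DecidableEq ι] [Fintype β]
    [CommSemiring R] (n : ℕ) (f : ι → β → R) :
    ∑ h : ι → Fin n → β, ∏ i, ∏ k, f i (h i k) = ∏ i, (∑ b, f i b) ^ n := by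
  simp_rw [Fintype.sum_pow, Fintype.prod_sum]

lemma sum_starPotentialL {N L : ℕ} (p θ : Fin N → ℝ) (H : Bool) :
    ∑ h : Fin N → Fin L → Bool, starPotentialL p θ h H =
      ∏ i, (exp (p i) * (if H then exp (θ i / L) else 1) + 1) ^ L := by
  refine (Fintype.sum_pi_prod_prod L fun i (b : Bool) =>
    (if b then exp (p i) else 1) * (if b ∧ H then exp (θ i / L) else 1)).trans ?_
  cases H <;> simp

lemma sigmoid_log_sub_log {a b : ℝ} (ha : 0 < a) (hb : 0 < b) :
    _root_.sigmoid (log a - log b) = a / (a + b) := by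
  rw [_root_.sigmoid, exp_sub, exp_log ha, exp_log hb]
  field_simp

lemma hasDerivAt_log_exp_add_one (x : ℝ) :
    HasDerivAt (fun x => log (exp x + 1)) (_root_.sigmoid x) x := by
  have := ((hasDerivAt_exp x).add_const 1).log (by positivity)
  rwa [← _root_.sigmoid] at this

lemma HasDerivAt.tendsto_nat_mul_sub {f : ℝ → ℝ} {f' x : ℝ} (hf : HasDerivAt f f' x) (c : ℝ) :
    Tendsto (fun n : ℕ => n * (f (x + c / n) - f x)) atTop (𝓝 (f' * c)) := by
  have hg : HasDerivAt (fun t => f (x + t * c)) (f' * c) 0 :=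
    hf.comp_of_eq 0 ((hasDerivAt_mul_const c).const_add x) (by simp)
  have hinv : Tendsto (fun n : ℕ => (n : ℝ)⁻¹) atTop (𝓝[≠] 0) :=
    tendsto_nhdsWithin_of_tendsto_nhds_of_eventually_within _
      tendsto_inv_atTop_nhds_zero_nat
      (by filter_upwards [eventually_ne_atTop 0] with n hn using by simpa)
  exact (hg.tendsto_slope_zero.comp hinv).congr fun n => by simp [div_eq_inv_mul]

lemma log_prod_pow_sub_log_prod_pow {ι : Type*} [Fintype ι] (n : ℕ) {a b : ι → ℝ}
    (ha : ∀ i, 0 < a i) (hb : ∀ i, 0 < b i) :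
    log (∏ i, a i ^ n) - log (∏ i, b i ^ n) = ∑ i, n * (log (a i) - log (b i)) := by
  rw [log_prod fun i _ => (pow_pos (ha i) n).ne', log_prod fun i _ => (pow_pos (hb i) n).ne',
    ← sum_sub_distrib]
  simp [log_pow, mul_sub]

theorem stmt_12 (N : ℕ) (p θ : Fin N → ℝ) :
    (∀ L : ℕ, 0 < L →
      (∑ h : Fin N → Fin L → Bool, starPotentialL p θ h true =
          ∏ i : Fin N, (Real.exp (p i) * Real.exp (θ i / L) + 1) ^ L) ∧
      (∑ h : Fin N → Fin L → Bool, starPotentialL p θ h false =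
          ∏ i : Fin N, (Real.exp (p i) + 1) ^ L)) ∧
    Tendsto (fun L : ℕ =>
        (∏ i : Fin N, (Real.exp (p i) * Real.exp (θ i / L) + 1) ^ L) /
          ((∏ i : Fin N, (Real.exp (p i) * Real.exp (θ i / L) + 1) ^ L) +
            ∏ i : Fin N, (Real.exp (p i) + 1) ^ L))
      atTop (nhds (_root_.sigmoid (∑ i : Fin N, _root_.sigmoid (p i) * θ i))) := by
  refine ⟨fun L _ => ⟨by simp [sum_starPotentialL], by simp [sum_starPotentialL]⟩, ?_⟩
  have hlim := tendsto_finsetSum univ fun i _ =>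
    (hasDerivAt_log_exp_add_one (p i)).tendsto_nat_mul_sub (θ i)
  have hσ : Continuous _root_.sigmoid :=
    continuous_exp.div (continuous_exp.add continuous_const) fun x => by positivity
  refine (hσ.tendsto _ |>.comp hlim).congr fun L => ?_
  rw [Function.comp_apply, ← sigmoid_log_sub_log (by positivity) (by positivity),
    log_prod_pow_sub_log_prod_pow L (fun i => by positivity) (fun i => by positivity)]
  simp only [exp_add]
end

section
/- Adding observed parents: with additionally M observed binary values g_1,…,g_M with edge weights w_j to H, P(H=1 | g) from the L-copy construction converges, as L → ∞, to σ(∑_{j=1}^M w_j g_j + ∑_{i=1}^N σ(p_i) θ_i). (Theorem 1, Matching Probabilities.) -/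
/-!
Dividing numerator and denominator by `∏ (exp pᵢ + 1) ^ L` writes the ratio as
`σ (∑ wⱼ gⱼ + ∑ᵢ L * (log (exp pᵢ * exp (θᵢ / L) + 1) - log (exp pᵢ + 1)))`.
The `i`-th summand is the difference quotient, with step `1 / L`, of
`s ↦ log (exp pᵢ * exp (θᵢ * s) + 1)` at `0`, so it tends to the derivative `σ pᵢ * θᵢ`;
continuity of `σ` concludes.
-/

open Real Finset Filter

open Topology

lemma sigmoid_eq_real_sigmoid : _root_.sigmoid = Real.sigmoid := by
  ext x
  rw [_root_.sigmoid, Real.sigmoid_def, exp_neg]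
  field_simp

lemma exp_mul_div_exp_mul_add_eq_sigmoid (c : ℝ) {x y : ℝ} (hx : 0 < x) (hy : 0 < y) :
    exp c * x / (exp c * x + y) = Real.sigmoid (c + (log x - log y)) := by
  rw [← sigmoid_eq_real_sigmoid, _root_.sigmoid, exp_add, exp_sub, exp_log hx, exp_log hy]
  field_simp

lemma HasDerivAt.tendsto_nat_smul_sub {E : Type*} [NormedAddCommGroup E] [NormedSpace ℝ E]
    {f : ℝ → E} {f' : E} {x : ℝ} (hf : HasDerivAt f f' x) :
    Tendsto (fun n : ℕ => (n : ℝ) • (f (x + (n : ℝ)⁻¹) - f x)) atTop (𝓝 f') := by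
  simpa [Function.comp_def] using hf.tendsto_slope_zero_right.comp
    (tendsto_inv_atTop_nhdsGT_zero.comp tendsto_natCast_atTop_atTop)

lemma hasDerivAt_log_exp_mul_exp_mul_add_one (a t : ℝ) :
    HasDerivAt (fun s => log (exp a * exp (t * s) + 1)) (Real.sigmoid a * t) 0 := by
  have h := ((((hasDerivAt_id' (0 : ℝ)).const_mul t).exp).const_mul (exp a)).add_const 1
  convert h.log (by positivity) using 1
  rw [← sigmoid_eq_real_sigmoid, _root_.sigmoid]
  simp only [mul_zero, exp_zero, mul_one, one_mul]
  ring

lemma tendsto_nat_mul_log_sub (a t : ℝ) :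
    Tendsto (fun L : ℕ => (L : ℝ) * (log (exp a * exp (t / L) + 1) - log (exp a + 1)))
      atTop (𝓝 (Real.sigmoid a * t)) := by
  simpa [div_eq_mul_inv] using (hasDerivAt_log_exp_mul_exp_mul_add_one a t).tendsto_nat_smul_sub

theorem stmt_13_general (N M : ℕ) (p θ : Fin N → ℝ) (w g : Fin M → ℝ) :
    Tendsto (fun L : ℕ =>
        (Real.exp (∑ j : Fin M, w j * g j) *
            ∏ i : Fin N, (Real.exp (p i) * Real.exp (θ i / L) + 1) ^ L) /
          (Real.exp (∑ j : Fin M, w j * g j) *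
              (∏ i : Fin N, (Real.exp (p i) * Real.exp (θ i / L) + 1) ^ L) +
            ∏ i : Fin N, (Real.exp (p i) + 1) ^ L))
      atTop
      (nhds (_root_.sigmoid (∑ j : Fin M, w j * g j + ∑ i : Fin N, _root_.sigmoid (p i) * θ i))) := by
  rw [sigmoid_eq_real_sigmoid]
  have hexponent := (tendsto_const_nhds (x := ∑ j : Fin M, w j * g j)).add
    (tendsto_finsetSum univ fun i _ => tendsto_nat_mul_log_sub (p i) (θ i))
  refine ((continuous_sigmoid.tendsto _).comp hexponent).congr fun L => ?_
  rw [Function.comp_apply, exp_mul_div_exp_mul_add_eq_sigmoid _ (by positivity) (by positivity),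
    log_prod fun i _ => by positivity, log_prod fun i _ => by positivity, ← sum_sub_distrib]
  simp only [log_pow, mul_sub]

theorem stmt_13 (N M : ℕ) (p θ : Fin N → ℝ) (w g : Fin M → ℝ)
    (hg : ∀ j, g j = 0 ∨ g j = 1) :
    Tendsto (fun L : ℕ =>
        (Real.exp (∑ j : Fin M, w j * g j) *
            ∏ i : Fin N, (Real.exp (p i) * Real.exp (θ i / L) + 1) ^ L) /
          (Real.exp (∑ j : Fin M, w j * g j) *
              (∏ i : Fin N, (Real.exp (p i) * Real.exp (θ i / L) + 1) ^ L) +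
            ∏ i : Fin N, (Real.exp (p i) + 1) ^ L))
      atTop
      (nhds (_root_.sigmoid (∑ j : Fin M, w j * g j + ∑ i : Fin N, _root_.sigmoid (p i) * θ i))) :=
  stmt_13_general N M p θ w g
end
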